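/- Let T be a tournament on n = 4k vertices. Then the arrow-simplicity of T satisfies s(T) ≤ 2k - 2. -/

import Mathlib

open Finset

/-- A tournament on vertex set `V`: an orientation of the complete graph.
`r x y` means `x` dominates `y` (the arc `(x,y)` is present). -/
structure Tournament (V : Type*) where
  r : V → V → Bool
  irrefl : ∀ x, r x x = false
  total : ∀ x y, x ≠ y → r x y = !r y x

variable {V : Type*}

/-- Out-neighborhood `v(x)`. -/
def Tournament.outSet [Fintype V] (T : Tournament V) (x : V) : Finset V :=
  univ.filter fun y => T.r x y = true

/-- In-neighborhood `f(x)`. -/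
def Tournament.inSet [Fintype V] (T : Tournament V) (x : V) : Finset V :=
  univ.filter fun y => T.r y x = true

/-- Out-degree `d⁺(x)`. -/
def Tournament.outDeg [Fintype V] (T : Tournament V) (x : V) : ℕ :=
  (T.outSet x).card

/-- In-degree `d⁻(x)`. -/
def Tournament.inDeg [Fintype V] (T : Tournament V) (x : V) : ℕ :=
  (T.inSet x).card

/-- Number of separators `Δ(x,y) = |v(x)∩f(y)| + |f(x)∩v(y)|`. -/
def Tournament.sep [Fintype V] [DecidableEq V] (T : Tournament V) (x y : V) : ℕ :=
  (T.outSet x ∩ T.inSet y).card + (T.inSet x ∩ T.outSet y).card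

/-- `I` is a module of `T` if every vertex outside `I` relates uniformly to `I`. -/
def Tournament.IsModule [Fintype V] (T : Tournament V) (I : Finset V) : Prop :=
  ∀ x ∉ I, (∀ y ∈ I, T.r x y = true) ∨ (∀ y ∈ I, T.r y x = true)

/-- A tournament is simple if all its modules are trivial. -/
def Tournament.IsSimple [Fintype V] (T : Tournament V) : Prop :=
  ∀ I : Finset V, T.IsModule I → I.card ≤ 1 ∨ I = univ

/-- The number of arcs of `T` that are reversed in `T'`. -/
def Tournament.dist [Fintype V] (T T' : Tournament V) : ℕ :=
  (univ.filter fun p : V × V => T.r p.1 p.2 = true ∧ T'.r p.1 p.2 = false).card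

/-- Arrow-simplicity: the least number of arcs whose reversal yields a
non-simple tournament. -/
noncomputable def Tournament.simplicity [Fintype V] (T : Tournament V) : ℕ :=
  sInf {m : ℕ | ∃ T' : Tournament V, ¬ T'.IsSimple ∧ T.dist T' = m}

/-- Subtournament induced on a finset of vertices. -/
def Tournament.sub (T : Tournament V) (s : Finset V) : Tournament {x // x ∈ s} where
  r a b := T.r a b
  irrefl a := T.irrefl a
  total a b h := T.total a b fun e => h (Subtype.ext e)

/-- The relation obtained from `T` by reversing the orientation between `x` and `y`
whenever `g x y` holds. -/
def Tournament.flipRel (T : Tournament V) (g : V → V → Bool) (x y : V) : Bool :=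
  if g x y = true then !T.r x y else T.r x y

/-!
Reversing the arcs between a vertex `w` and a set `E ∌ w` takes `|E|` reversals. Reversing
the out-arcs (in-arcs) of `w` makes `V ∖ {w}` a module, so `s(T) ≤ min (d⁺(w), d⁻(w))`;
reversing the arcs between `y` and the separators of `{x, y}` makes `{x, y}` a module, so
`s(T) ≤ Δ(x, y)`. If no degree is at most `2k - 2`, every out-degree is `m = 2k - 1` or `m + 1`,
and degree counting shows that each value is taken by exactly `2k` vertices. Double counting
gives `∑_{x,y} Δ(x, y) = 2 ∑_z d⁺(z) d⁻(z) = 8k · m(m + 1)`, so some row sum `∑_y Δ(x, y)` is at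
most `2m(m + 1)`. On the other hand `d⁺(x) + d⁺(y) ≡ Δ(x, y) + 1 (mod 2)`, so `Δ(x, y)` is even
for the `2k` vertices `y` in the other degree class than `x`; as `m` is odd, `Δ ≥ m` everywhere
would make that row sum at least `(4k - 1)m + 2k > 2m(m + 1)`. Hence `Δ(x, y) ≤ m - 1` for
some pair.
-/

namespace Tournament

variable (T : Tournament V)

lemma r_asymm {x y : V} (hr : T.r x y = true) : T.r y x = false := by
  by_cases hxy : x = y
  · subst hxy; exact T.irrefl x
  · simpa [hr] using T.total y x (Ne.symm hxy)

lemma r_of_r_eq_false {x y : V} (hxy : x ≠ y) (hr : T.r x y = false) : T.r y x = true := by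
  simpa [hr] using T.total y x (Ne.symm hxy)

section Degrees

variable [Fintype V]

lemma outDeg_eq_sum (x : V) : T.outDeg x = ∑ y, if T.r x y = true then 1 else 0 :=
  card_filter _ _

lemma inDeg_eq_sum (x : V) : T.inDeg x = ∑ y, if T.r y x = true then 1 else 0 :=
  card_filter _ _

lemma outDeg_add_inDeg (x : V) : T.outDeg x + T.inDeg x = Fintype.card V - 1 := by
  classical
  have hpoint : ∀ y, ((if T.r x y = true then 1 else 0) + if T.r y x = true then 1 else 0)
      = if y = x then 0 else 1 := by
    intro y
    by_cases hyx : y = x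
    · subst hyx; simp [T.irrefl]
    · cases h : T.r x y <;> simp [hyx, h, T.r_asymm, T.r_of_r_eq_false (Ne.symm hyx)]
  rw [outDeg_eq_sum, inDeg_eq_sum, ← sum_add_distrib, sum_congr rfl fun y _ => hpoint y]
  simp [sum_ite, filter_ne' univ x, card_univ]

lemma sum_outDeg_eq_sum_inDeg : ∑ x, T.outDeg x = ∑ x, T.inDeg x := by
  simp only [outDeg_eq_sum, inDeg_eq_sum]
  exact sum_comm

lemma two_mul_sum_outDeg :
    2 * ∑ x, T.outDeg x = Fintype.card V * (Fintype.card V - 1) := by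
  rw [two_mul]
  nth_rw 2 [sum_outDeg_eq_sum_inDeg]
  rw [← sum_add_distrib, sum_congr rfl fun x _ => T.outDeg_add_inDeg x, sum_const, card_univ,
    smul_eq_mul]

end Degrees

section Separators

variable [Fintype V] [DecidableEq V]

lemma card_outSet_inter_inSet (x y : V) :
    #(T.outSet x ∩ T.inSet y) =
      ∑ z, (if T.r x z = true then 1 else 0) * (if T.r z y = true then 1 else 0) := by
  simp only [outSet, inSet, ← filter_and, card_filter, ite_zero_mul_ite_zero, mul_one]

lemma sum_sum_card_outSet_inter_inSet :
    ∑ x, ∑ y, #(T.outSet x ∩ T.inSet y) = ∑ z, T.outDeg z * T.inDeg z := by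
  simp only [card_outSet_inter_inSet]
  rw [sum_congr rfl fun x _ => sum_comm, sum_comm]
  refine sum_congr rfl fun z _ => ?_
  rw [outDeg_eq_sum, inDeg_eq_sum, mul_comm, sum_mul_sum]

lemma sum_sum_sep : ∑ x, ∑ y, T.sep x y = 2 * ∑ z, T.outDeg z * T.inDeg z := by
  have hswap : ∑ x, ∑ y, #(T.inSet x ∩ T.outSet y) = ∑ x, ∑ y, #(T.outSet x ∩ T.inSet y) := by
    rw [sum_comm]
    simp only [inter_comm]
  simp only [sep, sum_add_distrib, hswap, sum_sum_card_outSet_inter_inSet, two_mul]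

lemma outDeg_eq_card_inter_add_card_inter {x y : V} (hxy : x ≠ y) :
    T.outDeg x = #(T.outSet x ∩ T.inSet y) + #(T.outSet x ∩ T.outSet y) +
      if T.r x y = true then 1 else 0 := by
  have hout : #(T.outSet x ∩ T.outSet y) =
      ∑ z, (if T.r x z = true then 1 else 0) * (if T.r y z = true then 1 else 0) := by
    simp only [outSet, ← filter_and, card_filter, ite_zero_mul_ite_zero, mul_one]
  have harc : (if T.r x y = true then 1 else 0) =
      ∑ z, if z = y then (if T.r x z = true then 1 else 0) else 0 := by
    simp
  rw [outDeg_eq_sum, card_outSet_inter_inSet, hout, harc, ← sum_add_distrib, ← sum_add_distrib]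
  refine sum_congr rfl fun z _ => ?_
  by_cases hzy : z = y
  · subst hzy; simp [T.irrefl]
  · cases h : T.r y z <;> simp [hzy, h, T.r_asymm, T.r_of_r_eq_false (Ne.symm hzy)]

lemma outDeg_add_outDeg {x y : V} (hxy : x ≠ y) :
    T.outDeg x + T.outDeg y = T.sep x y + 2 * #(T.outSet x ∩ T.outSet y) + 1 := by
  have hone : ((if T.r x y = true then 1 else 0) + if T.r y x = true then 1 else 0) = 1 := by
    cases h : T.r x y <;> simp [T.r_asymm, T.r_of_r_eq_false hxy, h]
  rw [T.outDeg_eq_card_inter_add_card_inter hxy,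
    T.outDeg_eq_card_inter_add_card_inter (Ne.symm hxy), sep,
    inter_comm (T.outSet y) (T.inSet x), inter_comm (T.outSet y) (T.outSet x)]
  omega

def sepSet (x y : V) : Finset V :=
  (T.outSet x ∩ T.inSet y) ∪ (T.inSet x ∩ T.outSet y)

lemma card_sepSet (x y : V) : #(T.sepSet x y) = T.sep x y := by
  refine card_union_of_disjoint (disjoint_left.2 fun z hz hz' => ?_)
  simp only [outSet, inSet, mem_inter, mem_filter, mem_univ, true_and] at hz hz'
  simp [T.r_asymm hz.1] at hz'

lemma notMem_sepSet_right (x y : V) : y ∉ T.sepSet x y := by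
  simp [sepSet, outSet, inSet, T.irrefl]

lemma mem_sepSet_iff {x y z : V} (hzx : z ≠ x) (hzy : z ≠ y) :
    z ∈ T.sepSet x y ↔ T.r x z ≠ T.r y z := by
  simp only [sepSet, outSet, inSet, mem_union, mem_inter, mem_filter, mem_univ, true_and]
  cases hx : T.r x z <;> cases hy : T.r y z <;>
    simp [hx, hy, T.r_asymm, T.r_of_r_eq_false (Ne.symm hzx),
      T.r_of_r_eq_false (Ne.symm hzy)]

end Separators

section Flips

variable [DecidableEq V]

def flipStar (w : V) (E : Finset V) (hw : w ∉ E) : Tournament V where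
  r := T.flipRel fun a b => decide ((a = w ∧ b ∈ E) ∨ (b = w ∧ a ∈ E))
  irrefl a := by
    by_cases ha : a = w
    · subst ha; simp [flipRel, hw, T.irrefl]
    · simp [flipRel, ha, T.irrefl]
  total a b hab := by
    simp only [flipRel, T.total a b hab, or_comm (a := a = w ∧ b ∈ E)]
    split_ifs <;> rfl

variable {w : V} {E : Finset V} (hw : w ∉ E)

lemma flipStar_r_of_ne {a b : V} (ha : a ≠ w) (hb : b ≠ w) :
    (T.flipStar w E hw).r a b = T.r a b := by
  simp [flipStar, flipRel, ha, hb]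

lemma flipStar_r_center (z : V) :
    (T.flipStar w E hw).r w z = if z ∈ E then !T.r w z else T.r w z := by
  by_cases hz : z = w
  · subst hz; simp [flipStar, flipRel, hw]
  · simp [flipStar, flipRel, hz]

lemma flipStar_r_eq_false_iff {a b : V} :
    T.r a b = true ∧ (T.flipStar w E hw).r a b = false ↔
      T.r a b = true ∧ ((a = w ∧ b ∈ E) ∨ (b = w ∧ a ∈ E)) := by
  by_cases h : (a = w ∧ b ∈ E) ∨ (b = w ∧ a ∈ E) <;>
    simp +contextual [flipStar, flipRel, h]

lemma dist_flipStar [Fintype V] : T.dist (T.flipStar w E hw) = #E := by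
  have hne : ∀ z ∈ E, z ≠ w := fun z hz h => hw (h ▸ hz)
  symm
  refine card_nbij' (fun z => if T.r w z = true then (w, z) else (z, w))
    (fun p => if p.1 = w then p.2 else p.1) ?_ ?_ ?_ ?_
  · intro z (hz : z ∈ E)
    have := hne z hz
    cases h : T.r w z <;>
      simp [flipStar_r_eq_false_iff, h, hz, this, T.r_of_r_eq_false (Ne.symm this)]
  · rintro ⟨a, b⟩ hp
    simp only [mem_coe, mem_filter, mem_univ, true_and, flipStar_r_eq_false_iff] at hp
    rcases hp with ⟨-, ⟨rfl, hb⟩ | ⟨rfl, ha⟩⟩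
    · simpa using hb
    · simpa [hne a ha] using ha
  · intro z hz
    cases h : T.r w z <;> simp [h, hne z hz]
  · rintro ⟨a, b⟩ hp
    simp only [mem_coe, mem_filter, mem_univ, true_and, flipStar_r_eq_false_iff] at hp
    rcases hp with ⟨hab, ⟨rfl, hb⟩ | ⟨rfl, ha⟩⟩
    · simp [hab]
    · simp [hne a ha, T.r_asymm hab]

end Flips

section NearRegular

variable [Fintype V] {m : ℕ} (hcard : Fintype.card V = 2 * m + 2)
  (hdeg : ∀ z, T.outDeg z = m ∨ T.outDeg z = m + 1)
include hcard hdeg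

lemma card_filter_outDeg_eq_succ : #{z | T.outDeg z = m + 1} = m + 1 := by
  have hsum : ∑ z, T.outDeg z = ∑ z, (m + if T.outDeg z = m + 1 then 1 else 0) :=
    sum_congr rfl fun z _ => by rcases hdeg z with h | h <;> simp [h]
  have htwice := T.two_mul_sum_outDeg
  rw [hsum, sum_add_distrib, sum_boole, sum_const, card_univ, hcard, smul_eq_mul] at htwice
  rw [Nat.cast_id, show 2 * m + 2 - 1 = 2 * m + 1 by omega] at htwice
  linarith

lemma card_filter_outDeg_ne (x : V) : #{y | T.outDeg y ≠ T.outDeg x} = m + 1 := by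
  have hB := T.card_filter_outDeg_eq_succ hcard hdeg
  rcases hdeg x with hx | hx
  · rw [← hB]
    congr 1
    ext y
    rcases hdeg y with hy | hy <;> simp [hx, hy]
  · have hsplit : m + 1 + #{y | T.outDeg y ≠ m + 1} = 2 * m + 2 := by
      have := card_filter_add_card_filter_not (s := univ) fun y => T.outDeg y = m + 1
      rwa [hB, card_univ, hcard] at this
    rw [hx]
    omega

variable [DecidableEq V]

lemma lt_sum_sep (hm : Odd m) (hsep : ∀ x y, x ≠ y → m ≤ T.sep x y) (x : V) :
    2 * m * (m + 1) < ∑ y, T.sep x y := by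
  have hpoint : ∀ y, m + (if T.outDeg y ≠ T.outDeg x then 1 else 0)
      ≤ T.sep x y + if y = x then m else 0 := by
    intro y
    by_cases hyx : y = x
    · simp [hyx]
    by_cases hdiff : T.outDeg y ≠ T.outDeg x
    · -- `Δ(x, y)` is even here, so the odd lower bound `m` is not attained
      have hpar := T.outDeg_add_outDeg (Ne.symm hyx)
      have hxy := hsep x y (Ne.symm hyx)
      obtain ⟨j, rfl⟩ := hm
      rcases hdeg x with hx | hx <;> rcases hdeg y with hy | hy <;> simp [hyx, hdiff] <;> omega
    · simpa [hyx, hdiff] using hsep x y (Ne.symm hyx)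
  have hsum := sum_le_sum fun y (_ : y ∈ univ) => hpoint y
  simp only [sum_add_distrib, sum_const, card_univ, hcard, smul_eq_mul, sum_boole, Nat.cast_id,
    T.card_filter_outDeg_ne hcard hdeg, sum_ite_eq', mem_univ, if_true] at hsum
  linarith

lemma exists_sep_lt (hm : Odd m) : ∃ x y, x ≠ y ∧ T.sep x y < m := by
  by_contra! hsep
  have hprod : ∀ z, T.outDeg z * T.inDeg z = m * (m + 1) := by
    intro z
    have := T.outDeg_add_inDeg z
    rcases hdeg z with h | h
    · rw [h, show T.inDeg z = m + 1 by omega]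
    · rw [h, show T.inDeg z = m by omega, mul_comm]
  have htotal := T.sum_sum_sep
  rw [sum_congr rfl fun z _ => hprod z, sum_const, card_univ, hcard, smul_eq_mul] at htotal
  have hne : (univ : Finset V).Nonempty := card_pos.1 (by rw [card_univ]; omega)
  have hlower := sum_lt_sum_of_nonempty hne fun x _ => T.lt_sum_sep hcard hdeg hm hsep x
  rw [sum_const, card_univ, hcard, smul_eq_mul, htotal] at hlower
  linarith

end NearRegular

section Simplicity

variable [Fintype V]

lemma simplicity_le_dist {T' : Tournament V} (h : ¬T'.IsSimple) : T.simplicity ≤ T.dist T' :=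
  Nat.sInf_le ⟨T', h, rfl⟩

lemma simplicity_eq_zero_of_isEmpty [IsEmpty V] : T.simplicity = 0 := by
  suffices {m : ℕ | ∃ T' : Tournament V, ¬T'.IsSimple ∧ T.dist T' = m} = ∅ by
    rw [simplicity, this, Nat.sInf_empty]
  refine Set.eq_empty_of_forall_notMem fun m ⟨T', hT', _⟩ => hT' fun I _ => ?_
  simp [eq_empty_of_isEmpty I]

lemma not_isSimple_of_isModule {I : Finset V} (hI : T.IsModule I) (hcard : 2 ≤ #I)
    (hne : I ≠ univ) : ¬T.IsSimple := fun hs => by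
  rcases hs I hI with h | h
  · omega
  · exact hne h

variable [DecidableEq V]

lemma isModule_univ_erase {w : V} (h : (∀ z ≠ w, T.r w z = true) ∨ ∀ z ≠ w, T.r z w = true) :
    T.IsModule (univ.erase w) := by
  intro x hx
  obtain rfl : x = w := by simpa using hx
  simpa using h

lemma isModule_pair {x y : V} (h : ∀ z, z ≠ x → z ≠ y → T.r x z = T.r y z) :
    T.IsModule {x, y} := by
  intro z hz
  simp only [mem_insert, mem_singleton, not_or] at hz
  obtain ⟨hzx, hzy⟩ := hz
  have hyz := h z hzx hzy
  cases hxz : T.r x z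
  · left
    simp [T.r_of_r_eq_false (Ne.symm hzx) hxz, T.r_of_r_eq_false (Ne.symm hzy) (hyz ▸ hxz)]
  · right
    simp [hxz, ← hyz]

lemma simplicity_le_card_of_flipStar {w : V} {E : Finset V} (hw : w ∉ E) {I : Finset V}
    (hI : (T.flipStar w E hw).IsModule I) (hcard : 2 ≤ #I) (hne : I ≠ univ) :
    T.simplicity ≤ #E :=
  T.dist_flipStar hw ▸ T.simplicity_le_dist (not_isSimple_of_isModule _ hI hcard hne)

lemma two_le_card_univ_erase (hV : 3 ≤ Fintype.card V) (w : V) : 2 ≤ #(univ.erase w) := by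
  rw [card_erase_of_mem (mem_univ w), card_univ]
  omega

lemma simplicity_le_outDeg (hV : 3 ≤ Fintype.card V) (w : V) : T.simplicity ≤ T.outDeg w := by
  have hw : w ∉ T.outSet w := by simp [outSet, T.irrefl]
  refine T.simplicity_le_card_of_flipStar hw (I := univ.erase w) ?_
    (two_le_card_univ_erase hV w) (erase_ssubset (mem_univ w)).ne
  refine isModule_univ_erase _ (Or.inr fun z hz => ?_)
  refine r_of_r_eq_false _ (Ne.symm hz) ?_
  rw [flipStar_r_center]
  cases h : T.r w z <;> simp [outSet, h]

lemma simplicity_le_inDeg (hV : 3 ≤ Fintype.card V) (w : V) : T.simplicity ≤ T.inDeg w := by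
  have hw : w ∉ T.inSet w := by simp [inSet, T.irrefl]
  refine T.simplicity_le_card_of_flipStar hw (I := univ.erase w) ?_
    (two_le_card_univ_erase hV w) (erase_ssubset (mem_univ w)).ne
  refine isModule_univ_erase _ (Or.inl fun z hz => ?_)
  rw [flipStar_r_center]
  cases h : T.r w z <;> simp [inSet, h, T.r_asymm, T.r_of_r_eq_false (Ne.symm hz)]

lemma simplicity_le_sep (hV : 3 ≤ Fintype.card V) {x y : V} (hxy : x ≠ y) :
    T.simplicity ≤ T.sep x y := by
  have hy := T.notMem_sepSet_right x y
  rw [← card_sepSet]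
  refine T.simplicity_le_card_of_flipStar hy (I := {x, y}) ?_ (card_pair hxy).ge fun h => ?_
  · refine isModule_pair _ fun z hzx hzy => ?_
    rw [flipStar_r_of_ne _ _ hxy hzy, flipStar_r_center]
    split_ifs with hsep <;> rw [T.mem_sepSet_iff hzx hzy] at hsep
    · exact Bool.eq_not_iff.2 hsep
    · exact not_not.1 hsep
  · have := card_pair hxy
    rw [h, card_univ] at this
    omega

end Simplicity

end Tournament

/-- If `n = 4k` then `s(T) ≤ 2k - 2`. -/
theorem stmt_18 {V : Type*} [Fintype V] [DecidableEq V] (k : ℕ) (T : Tournament V)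
    (hcard : Fintype.card V = 4 * k) :
    T.simplicity ≤ 2 * k - 2 := by
  rcases Nat.eq_zero_or_pos k with rfl | hk
  · have : IsEmpty V := Fintype.card_eq_zero_iff.mp hcard
    simp [T.simplicity_eq_zero_of_isEmpty]
  have hV : 3 ≤ Fintype.card V := by omega
  by_cases hsmall : ∃ w, T.outDeg w ≤ 2 * k - 2 ∨ T.inDeg w ≤ 2 * k - 2
  · obtain ⟨w, hw | hw⟩ := hsmall
    · exact (T.simplicity_le_outDeg hV w).trans hw
    · exact (T.simplicity_le_inDeg hV w).trans hw
  push Not at hsmall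
  have hdeg : ∀ z, T.outDeg z = 2 * k - 1 ∨ T.outDeg z = 2 * k - 1 + 1 := fun z => by
    have := T.outDeg_add_inDeg z
    have := hsmall z
    omega
  obtain ⟨x, y, hxy, hsep⟩ :=
    T.exists_sep_lt (by omega) hdeg ⟨k - 1, by omega⟩
  exact (T.simplicity_le_sep hV hxy).trans (by omega)
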